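/- arXiv:1104.2862 — 5 statements merged into one kernel-verified Lean document; each statement's English description precedes it below -/
import Mathlib

section
/- Let Z be an abelian group, Δ ⊆ Z a finite set, F ⊆ Z a finite symmetric set (F = −F), and x ∈ Z. Then Σ_{b∈Δ} |Δ[x] ∩ (b+F)|² ≤ Σ_{c∈Δ[x]} √( |F| · E(Δ[x], c+F) ). -/
/-!
Write `A = Δ[x]`. Since `F = -F`, `c ∈ b + F ↔ b ∈ c + F`, so double counting gives
`Σ_{b∈Δ} |A ∩ (b+F)|² = Σ_{c∈A} Σ_{b∈Δ∩(c+F)} |A ∩ (b+F)|`. Each inner sum is at most the number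
of pairs `(a, b) ∈ A × (c+F)` with `a - b ∈ F`, and Cauchy–Schwarz over the differences bounds
its square by `|F| · E(A, c+F)`; here `E(A, B)` is Mathlib's additive energy of `A` and `-B`.
-/

/-- The asymmetric additive energy `E(A,B)`: the number of quadruples
`(a,b,a',b') ∈ A×B×A×B` with `a − b = a' − b'`. -/
def Easym {Z : Type*} [AddCommGroup Z] [DecidableEq Z] (A B : Finset Z) : ℕ :=
  ((A ×ˢ B ×ˢ A ×ˢ B).filter fun p => p.1 - p.2.1 = p.2.2.1 - p.2.2.2).card

open Finset
open scoped Pointwise Combinatorics.Additive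

section

variable {Z : Type*} [AddCommGroup Z] [DecidableEq Z]

lemma easym_eq_addEnergy_neg (A B : Finset Z) : Easym A B = E[A, -B] := by
  rw [addEnergy_eq_card_filter, Easym]
  refine card_nbij' (fun p => ((p.1, -p.2.1), p.2.2.1, -p.2.2.2))
    (fun q => (q.1.1, -q.1.2, q.2.1, -q.2.2)) ?_ ?_ (fun _ _ => by simp) (fun _ _ => by simp)
  · rintro ⟨a, b, a', b'⟩ h
    simp_all [sub_eq_sub_iff_add_eq_add, ← sub_eq_add_neg]
  · rintro ⟨⟨a, b⟩, a', b'⟩ h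
    simp_all [sub_eq_add_neg]

lemma card_sq_le_card_mul_easym (A B F : Finset Z) :
    #{p ∈ A ×ˢ B | p.1 - p.2 ∈ F} ^ 2 ≤ #F * Easym A B := by
  have h_neg : #{p ∈ A ×ˢ B | p.1 - p.2 ∈ F} = #{p ∈ A ×ˢ (-B) | p.1 + p.2 ∈ F} :=
    card_equiv ((Equiv.refl Z).prodCongr (Equiv.neg Z)) (by simp [sub_eq_add_neg])
  rw [h_neg, easym_eq_addEnergy_neg]
  exact card_sq_le_card_mul_addEnergy _ _ _

lemma mem_image_add_left_iff {F : Finset Z} {a b : Z} : a ∈ F.image (b + ·) ↔ a - b ∈ F := by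
  simp [neg_add_eq_sub]

lemma sum_card_inter_image_add (A B F : Finset Z) :
    ∑ b ∈ B, #(A ∩ F.image (b + ·)) = #{p ∈ A ×ˢ B | p.1 - p.2 ∈ F} := by
  rw [card_filter, sum_product_right]
  refine sum_congr rfl fun b _ => ?_
  rw [← filter_mem_eq_inter, card_filter]
  simp only [mem_image_add_left_iff]

lemma sum_card_inter_image_add_le_sqrt (A B F : Finset Z) :
    (∑ b ∈ B, #(A ∩ F.image (b + ·)) : ℝ) ≤ √(#F * Easym A B) := by
  apply Real.le_sqrt_of_sq_le
  exact_mod_cast sum_card_inter_image_add A B F ▸ card_sq_le_card_mul_easym A B F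

lemma mem_image_add_comm {F : Finset Z} (hF : ∀ y : Z, y ∈ F ↔ -y ∈ F) {b c : Z} :
    c ∈ F.image (b + ·) ↔ b ∈ F.image (c + ·) := by
  rw [mem_image_add_left_iff, mem_image_add_left_iff, hF, neg_sub]

lemma sum_card_inter_image_add_sq {F : Finset Z} (hF : ∀ y : Z, y ∈ F ↔ -y ∈ F)
    (A Δ : Finset Z) :
    ∑ b ∈ Δ, #(A ∩ F.image (b + ·)) ^ 2
      = ∑ c ∈ A, ∑ b ∈ Δ ∩ F.image (c + ·), #(A ∩ F.image (b + ·)) := by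
  simp_rw [sq, ← smul_eq_mul, ← sum_const]
  exact sum_comm' fun b c => by rw [mem_inter, mem_inter, mem_image_add_comm hF]; tauto

end

/-- For a symmetric set `F`,
`Σ_{b∈Δ} |Δ[x] ∩ (b+F)|² ≤ Σ_{c∈Δ[x]} √(|F|·E(Δ[x], c+F))`, where `Δ[x] = Δ ∩ (x+Δ)`. -/
theorem sum_sq_inter_le_sum_sqrt {Z : Type*} [AddCommGroup Z] [DecidableEq Z]
    (Δ : Finset Z) (F : Finset Z) (hF : ∀ y : Z, y ∈ F ↔ -y ∈ F) (x : Z) :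
    ∑ b ∈ Δ, (((Δ ∩ Δ.image (x + ·)) ∩ F.image (b + ·)).card : ℝ) ^ 2
      ≤ ∑ c ∈ Δ ∩ Δ.image (x + ·),
          Real.sqrt ((F.card : ℝ) *
            (Easym (Δ ∩ Δ.image (x + ·)) (F.image (c + ·)) : ℝ)) := by
  set A := Δ ∩ Δ.image (x + ·)
  calc ∑ b ∈ Δ, (#(A ∩ F.image (b + ·)) : ℝ) ^ 2
      = ∑ c ∈ A, ∑ b ∈ Δ ∩ F.image (c + ·), (#(A ∩ F.image (b + ·)) : ℝ) := by
        exact_mod_cast sum_card_inter_image_add_sq hF A Δ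
    _ ≤ ∑ c ∈ A, ∑ b ∈ F.image (c + ·), (#(A ∩ F.image (b + ·)) : ℝ) :=
        sum_le_sum fun c _ => sum_le_sum_of_subset_of_nonneg inter_subset_right
          fun _ _ _ => Nat.cast_nonneg _
    _ ≤ _ := sum_le_sum fun c _ => sum_card_inter_image_add_le_sqrt A _ F
end

section
/- Let Z be an abelian group, Δ ⊆ Z a finite set, D ⊆ Z a finite set, and R ≥ 1 a natural number. If every x ∈ D satisfies |Δ ∩ (x+Δ)| ≥ R, then E_4(D) · R⁴ ≤ E_8(Δ). -/
/-!
An additive quadruple `x₁ + x₂ = x₃ + x₄` of `D`, together with `aᵢ ∈ Δ ∩ (xᵢ + Δ)`, i.e.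
`aᵢ = xᵢ + bᵢ` with `bᵢ = aᵢ - xᵢ ∈ Δ`, yields the solution
`a₁ + a₂ + b₃ + b₄ = b₁ + b₂ + a₃ + a₄` of the eight-term equation in `Δ`. The octuple
remembers every `aᵢ` and `bᵢ`, hence every `xᵢ = aᵢ - bᵢ`, so this map is injective, and each
quadruple has at least `R⁴` such lifts.
-/

/-- The additive energy `E₄(A)`: the number of quadruples
`(a₁,a₂,a₃,a₄) ∈ A⁴` with `a₁ + a₂ = a₃ + a₄`. -/
def E4 {Z : Type*} [AddCommGroup Z] [DecidableEq Z] (A : Finset Z) : ℕ :=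
  ((A ×ˢ A ×ˢ A ×ˢ A).filter fun p => p.1 + p.2.1 = p.2.2.1 + p.2.2.2).card

/-- The additive energy `E₈(A)`: the number of octuples
`(a₁,…,a₈) ∈ A⁸` with `a₁ + a₂ + a₃ + a₄ = a₅ + a₆ + a₇ + a₈`. -/
def E8 {Z : Type*} [AddCommGroup Z] [DecidableEq Z] (A : Finset Z) : ℕ :=
  ((A ×ˢ A ×ˢ A ×ˢ A ×ˢ A ×ˢ A ×ˢ A ×ˢ A).filter fun p =>
    p.1 + p.2.1 + p.2.2.1 + p.2.2.2.1
      = p.2.2.2.2.1 + p.2.2.2.2.2.1 + p.2.2.2.2.2.2.1 + p.2.2.2.2.2.2.2).card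

namespace AdditiveEnergy

variable {Z : Type*} [AddCommGroup Z] [DecidableEq Z]

def addQuadruples (A : Finset Z) : Finset (Z × Z × Z × Z) :=
  (A ×ˢ A ×ˢ A ×ˢ A).filter fun p => p.1 + p.2.1 = p.2.2.1 + p.2.2.2

theorem card_addQuadruples (A : Finset Z) : (addQuadruples A).card = E4 A := rfl

theorem mem_addQuadruples {A : Finset Z} {p : Z × Z × Z × Z} :
    p ∈ addQuadruples A ↔
      (p.1 ∈ A ∧ p.2.1 ∈ A ∧ p.2.2.1 ∈ A ∧ p.2.2.2 ∈ A) ∧ p.1 + p.2.1 = p.2.2.1 + p.2.2.2 := by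
  simp only [addQuadruples, Finset.mem_filter, Finset.mem_product]

def diffReprs (Δ : Finset Z) (x : Z) : Finset Z :=
  Δ ∩ Δ.image (x + ·)

theorem mem_diffReprs {Δ : Finset Z} {x a : Z} : a ∈ diffReprs Δ x ↔ a ∈ Δ ∧ a - x ∈ Δ := by
  simp only [diffReprs, Finset.mem_inter, Finset.mem_image, ← eq_sub_iff_add_eq', exists_eq_right]

def liftedQuadruples (Δ D : Finset Z) : Finset ((_ : Z × Z × Z × Z) × Z × Z × Z × Z) :=
  (addQuadruples D).sigma fun x =>
    diffReprs Δ x.1 ×ˢ diffReprs Δ x.2.1 ×ˢ diffReprs Δ x.2.2.1 ×ˢ diffReprs Δ x.2.2.2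

theorem card_liftedQuadruples (Δ D : Finset Z) :
    (liftedQuadruples Δ D).card = ∑ x ∈ addQuadruples D,
      (diffReprs Δ x.1).card * ((diffReprs Δ x.2.1).card *
        ((diffReprs Δ x.2.2.1).card * (diffReprs Δ x.2.2.2).card)) := by
  simp only [liftedQuadruples, Finset.card_sigma, Finset.card_product]

theorem card_liftedQuadruples_le_E8 (Δ D : Finset Z) : (liftedQuadruples Δ D).card ≤ E8 Δ := by
  refine Finset.card_le_card_of_injOn
    (fun s => (s.2.1, s.2.2.1, s.2.2.2.1 - s.1.2.2.1, s.2.2.2.2 - s.1.2.2.2,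
      s.2.1 - s.1.1, s.2.2.1 - s.1.2.1, s.2.2.2.1, s.2.2.2.2)) ?_ ?_
  · rintro ⟨⟨x₁, x₂, x₃, x₄⟩, a₁, a₂, a₃, a₄⟩ hs
    simp only [Finset.mem_coe, liftedQuadruples, Finset.mem_sigma, Finset.mem_product,
      mem_addQuadruples, mem_diffReprs] at hs
    obtain ⟨⟨-, hx⟩, ⟨ha₁, hb₁⟩, ⟨ha₂, hb₂⟩, ⟨ha₃, hb₃⟩, ⟨ha₄, hb₄⟩⟩ := hs
    simp only [Finset.mem_coe, Finset.mem_filter, Finset.mem_product]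
    refine ⟨⟨ha₁, ha₂, hb₃, hb₄, hb₁, hb₂, ha₃, ha₄⟩, ?_⟩
    calc a₁ + a₂ + (a₃ - x₃) + (a₄ - x₄)
        = a₁ - x₁ + (a₂ - x₂) + a₃ + a₄ + ((x₁ + x₂) - (x₃ + x₄)) := by abel
      _ = a₁ - x₁ + (a₂ - x₂) + a₃ + a₄ := by rw [hx, sub_self, add_zero]
  · rintro ⟨⟨x₁, x₂, x₃, x₄⟩, a₁, a₂, a₃, a₄⟩ - ⟨⟨y₁, y₂, y₃, y₄⟩, c₁, c₂, c₃, c₄⟩ - h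
    simp only [Prod.mk.injEq] at h
    obtain ⟨rfl, rfl, h₃, h₄, h₁, h₂, rfl, rfl⟩ := h
    rw [sub_right_inj] at h₁ h₂ h₃ h₄
    subst h₁ h₂ h₃ h₄
    rfl

end AdditiveEnergy

open AdditiveEnergy in
theorem E4_mul_R_pow_four_le_E8_general {Z : Type*} [AddCommGroup Z] [DecidableEq Z]
    (Δ D : Finset Z) (R : ℕ)
    (hrep : ∀ x ∈ D, R ≤ (Δ ∩ Δ.image (x + ·)).card) :
    E4 D * R ^ 4 ≤ E8 Δ := by
  have hlift : ∀ x ∈ addQuadruples D, R ^ 4 ≤ (diffReprs Δ x.1).card *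
      ((diffReprs Δ x.2.1).card * ((diffReprs Δ x.2.2.1).card * (diffReprs Δ x.2.2.2).card)) := by
    intro x hx
    obtain ⟨⟨h₁, h₂, h₃, h₄⟩, -⟩ := mem_addQuadruples.mp hx
    rw [show R ^ 4 = R * (R * (R * R)) by ring]
    exact Nat.mul_le_mul (hrep _ h₁) <| Nat.mul_le_mul (hrep _ h₂) <|
      Nat.mul_le_mul (hrep _ h₃) (hrep _ h₄)
  calc E4 D * R ^ 4 = ∑ _x ∈ addQuadruples D, R ^ 4 := by
        rw [Finset.sum_const, smul_eq_mul, card_addQuadruples]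
    _ ≤ (liftedQuadruples Δ D).card := by
        rw [card_liftedQuadruples]
        exact Finset.sum_le_sum hlift
    _ ≤ E8 Δ := card_liftedQuadruples_le_E8 Δ D

/-- If every `x ∈ D` has at least `R` representations as a difference of elements of `Δ`,
then `E₄(D)·R⁴ ≤ E₈(Δ)`. -/
theorem E4_mul_R_pow_four_le_E8 {Z : Type*} [AddCommGroup Z] [DecidableEq Z]
    (Δ D : Finset Z) (R : ℕ) (hR : 1 ≤ R)
    (hrep : ∀ x ∈ D, R ≤ (Δ ∩ Δ.image (x + ·)).card) :
    E4 D * R ^ 4 ≤ E8 Δ :=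
  E4_mul_R_pow_four_le_E8_general Δ D R hrep
end

section
/- Let Z be an abelian group, Δ ⊆ Z and D ⊆ Z finite sets, T ≥ 1 a real number, and P ⊆ D×D a set of pairs such that |Δ[x] ∩ Δ[y]| ≥ T for every (x,y) ∈ P. Then |P|² ≤ E_4(D) · |{z ∈ Z : |Δ ∩ (z+Δ)| ≥ T}|. (Note the set {z ∈ Z : |Δ ∩ (z+Δ)| ≥ T} is finite since T ≥ 1.) -/
/-!
Translating by `-y` maps `Δ[x] ∩ Δ[y]` into `Δ[x - y]`, so every pair `(x, y) ∈ P` has its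
difference in `S = {z : |Δ[z]| ≥ T}`; as `T ≥ 1`, each such `Δ[z]` is nonempty, whence `z ∈ Δ - Δ`.
Cauchy–Schwarz over the fibres of `(x, y) ↦ x - y` then gives
`|P|² ≤ |S| · #{(p, q) ∈ P² : p.1 - p.2 = q.1 - q.2}`, and the last count is at most `E₄(D)`.
-/

open scoped Pointwise

open Finset
open scoped Combinatorics.Additive

namespace Finset

variable {α : Type*} [DecidableEq α]

@[to_additive]
theorem mulEnergy_inv_right [CommGroup α] (s t : Finset α) : Eₘ[s, t⁻¹] = Eₘ[s, t] := by
  refine card_nbij' (fun x => (x.1, x.2.2⁻¹, x.2.1⁻¹)) (fun x => (x.1, x.2.2⁻¹, x.2.1⁻¹))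
    ?_ ?_ (by simp [Set.LeftInvOn]) (by simp [Set.RightInvOn, Set.LeftInvOn])
  all_goals
    rintro ⟨⟨a₁, a₂⟩, b₁, b₂⟩
    simp only [coe_filter, mem_product, mem_inv', inv_inv, Set.mem_ofPred_eq]
    rintro ⟨⟨⟨ha₁, ha₂⟩, hb₁, hb₂⟩, h⟩
    refine ⟨⟨⟨ha₁, ha₂⟩, hb₂, hb₁⟩, ?_⟩
    simpa [← div_eq_mul_inv, div_eq_div_iff_mul_eq_mul, eq_comm] using h

variable [AddCommGroup α]

theorem card_sq_le_card_mul_addEnergy_of_sub_mem {P : Finset (α × α)} {D S : Finset α}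
    (hP : P ⊆ D ×ˢ D) (hS : ∀ p ∈ P, p.1 - p.2 ∈ S) : #P ^ 2 ≤ #S * E[D] := by
  have hcard : #P ≤ #{xy ∈ D ×ˢ (-D) | xy.1 + xy.2 ∈ S} := by
    refine card_le_card_of_injOn (fun p => (p.1, -p.2)) (fun p hp => ?_) ?_
    · have := mem_product.1 (hP hp)
      simpa [← sub_eq_add_neg, hS p hp] using this
    · intro p _ q _ h
      simpa [Prod.ext_iff] using h
  calc #P ^ 2 ≤ #{xy ∈ D ×ˢ (-D) | xy.1 + xy.2 ∈ S} ^ 2 := by gcongr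
    _ ≤ #S * E[D, -D] := card_sq_le_card_mul_addEnergy _ _ _
    _ = #S * E[D] := by rw [addEnergy_neg_right]

theorem card_inter_vadd_inter_le (Δ : Finset α) (x y : α) :
    #((Δ ∩ (x +ᵥ Δ)) ∩ (Δ ∩ (y +ᵥ Δ))) ≤ #(Δ ∩ ((x - y) +ᵥ Δ)) :=
  calc #((Δ ∩ (x +ᵥ Δ)) ∩ (Δ ∩ (y +ᵥ Δ))) ≤ #((x +ᵥ Δ) ∩ (y +ᵥ Δ)) :=
        card_le_card (inter_subset_inter inter_subset_right inter_subset_right)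
    _ = #(y +ᵥ (((x - y) +ᵥ Δ) ∩ Δ)) := by rw [vadd_finset_inter, vadd_vadd, add_sub_cancel]
    _ = #(Δ ∩ ((x - y) +ᵥ Δ)) := by rw [card_vadd_finset, inter_comm]

theorem mem_sub_of_nonempty_inter_vadd {Δ : Finset α} {z : α} (h : (Δ ∩ (z +ᵥ Δ)).Nonempty) :
    z ∈ Δ - Δ := by
  obtain ⟨a, ha⟩ := h
  obtain ⟨haΔ, b, hb, rfl⟩ := mem_inter.1 ha |>.imp_right mem_vadd_finset.1
  exact mem_sub.2 ⟨_, haΔ, b, hb, by simp⟩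

end Finset

theorem E4_eq_addEnergy {Z : Type*} [AddCommGroup Z] [DecidableEq Z] (A : Finset Z) :
    E4 A = E[A] :=
  card_nbij' (fun x => ((x.1, x.2.2.1), x.2.1, x.2.2.2)) (fun x => (x.1.1, x.2.1, x.1.2, x.2.2))
    (by intro x; simp +contextual) (by intro x; simp +contextual) (by simp [Set.LeftInvOn])
    (by simp [Set.RightInvOn, Set.LeftInvOn])

/-- If `|Δ[x] ∩ Δ[y]| ≥ T` for every pair `(x,y) ∈ P ⊆ D×D`, then
`|P|² ≤ E₄(D) · |{z : |Δ ∩ (z+Δ)| ≥ T}|`.  Since `T ≥ 1` every such `z` lies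
in `Δ − Δ`, so the set of such `z` is the corresponding finite set. -/
theorem card_pairs_sq_le {Z : Type*} [AddCommGroup Z] [DecidableEq Z]
    (Δ D : Finset Z) (T : ℝ) (hT : 1 ≤ T) (P : Finset (Z × Z)) (hP : P ⊆ D ×ˢ D)
    (hPT : ∀ p ∈ P,
      T ≤ (((Δ ∩ Δ.image (p.1 + ·)) ∩ (Δ ∩ Δ.image (p.2 + ·))).card : ℝ)) :
    (P.card : ℝ) ^ 2
      ≤ (E4 D : ℝ) *
        (((Δ - Δ).filter fun z => T ≤ ((Δ ∩ Δ.image (z + ·)).card : ℝ)).card : ℝ) := by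
  have himage (z : Z) : Δ.image (z + ·) = z +ᵥ Δ := image_vadd (α := Z)
  simp only [himage] at hPT ⊢
  set S := (Δ - Δ).filter fun z => T ≤ (#(Δ ∩ (z +ᵥ Δ)) : ℝ)
  have hS : ∀ p ∈ P, p.1 - p.2 ∈ S := by
    intro p hp
    have hTle : T ≤ #(Δ ∩ ((p.1 - p.2) +ᵥ Δ)) :=
      (hPT p hp).trans (mod_cast card_inter_vadd_inter_le Δ p.1 p.2)
    have hne : (Δ ∩ ((p.1 - p.2) +ᵥ Δ)).Nonempty := by
      rw [← card_pos]
      exact_mod_cast zero_lt_one.trans_le (hT.trans hTle)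
    exact mem_filter.2 ⟨mem_sub_of_nonempty_inter_vadd hne, hTle⟩
  rw [mul_comm, E4_eq_addEnergy]
  exact_mod_cast card_sq_le_card_mul_addEnergy_of_sub_mem hP hS
end

section
/- Let Z be an abelian group, Δ ⊆ Z and F ⊆ Z finite sets, x ∈ Z, and let Q > 0, S > 0 be reals and R ≥ 1 a natural number. Assume: (1) every a ∈ Δ satisfies |{(b,c,d) ∈ Δ³ : a−b = c−d}| ≤ Q; (2) every y ∈ F satisfies |Δ ∩ (y+Δ)| ≥ R; (3) every y ∈ F satisfies |Δ[x] ∩ Δ[y]| ≥ S. Then |F| · S · R ≤ |Δ[x]| · Q. -/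
/-- An upper bound on the size of `F`: if every `a ∈ Δ` lies in at most `Q` additive
quadruples, every `y ∈ F` has at least `R` representations as a difference of elements
of `Δ`, and `|Δ[x] ∩ Δ[y]| ≥ S` for every `y ∈ F`, then `|F|·S·R ≤ |Δ[x]|·Q`. -/
theorem card_F_mul_le {Z : Type*} [AddCommGroup Z] [DecidableEq Z]
    (Δ F : Finset Z) (x : Z) (Q S : ℝ) (R : ℕ) (hQ : 0 < Q) (hS : 0 < S) (hR : 1 ≤ R)
    (hquad : ∀ a ∈ Δ,
      (((Δ ×ˢ Δ ×ˢ Δ).filter fun p => a - p.1 = p.2.1 - p.2.2).card : ℝ) ≤ Q)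
    (hrep : ∀ y ∈ F, R ≤ (Δ ∩ Δ.image (y + ·)).card)
    (hint : ∀ y ∈ F,
      S ≤ (((Δ ∩ Δ.image (x + ·)) ∩ (Δ ∩ Δ.image (y + ·))).card : ℝ)) :
    (F.card : ℝ) * S * R ≤ ((Δ ∩ Δ.image (x + ·)).card : ℝ) * Q := by
  classical
  set Dx : Finset Z := Δ ∩ Δ.image (x + ·) with hDx
  set D : Z → Finset Z := fun y => Δ ∩ Δ.image (y + ·) with hD
  set K : Finset (Z × Z × Z × Z) := (Dx ×ˢ Δ ×ˢ Δ ×ˢ Δ).filter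
      (fun p => p.1 - p.2.1 = p.2.2.1 - p.2.2.2) with hK
  -- membership in D y gives a - y ∈ Δ
  have hmemD : ∀ y a, a ∈ D y → a ∈ Δ ∧ a - y ∈ Δ := by
    intro y a ha
    have h1 := Finset.mem_of_mem_inter_left ha
    have h2 := Finset.mem_of_mem_inter_right ha
    obtain ⟨b, hb, hb2⟩ := Finset.mem_image.mp h2
    have hab : a - y = b := by rw [← hb2]; abel
    exact ⟨h1, hab ▸ hb⟩
  -- Upper bound: K.card ≤ Dx.card * Q
  have hup : (K.card : ℝ) ≤ (Dx.card : ℝ) * Q := by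
    have hcard : K.card = ∑ a ∈ Dx,
        ((Δ ×ˢ Δ ×ˢ Δ).filter fun p => a - p.1 = p.2.1 - p.2.2).card := by
      rw [hK, Finset.card_filter, Finset.sum_product]
      exact Finset.sum_congr rfl fun a _ => (Finset.card_filter _ _).symm
    rw [hcard]
    push_cast
    calc (∑ a ∈ Dx, (((Δ ×ˢ Δ ×ˢ Δ).filter fun p => a - p.1 = p.2.1 - p.2.2).card : ℝ))
        ≤ ∑ a ∈ Dx, Q := by
          refine Finset.sum_le_sum fun a ha => hquad a ?_
          exact Finset.mem_of_mem_inter_left (hDx ▸ ha)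
      _ = (Dx.card : ℝ) * Q := by rw [Finset.sum_const, nsmul_eq_mul]
  -- The injection for each y
  set g : Z → Finset (Z × Z × Z × Z) := fun y =>
    ((Dx ∩ D y) ×ˢ D y).image (fun p => (p.1, p.1 - y, p.2, p.2 - y)) with hg
  have hgsub : ∀ y ∈ F, g y ⊆ K := by
    intro y _ p hp
    simp only [hg, Finset.mem_image] at hp
    obtain ⟨⟨a, c⟩, hp, rfl⟩ := hp
    obtain ⟨hp1, hcDy⟩ := Finset.mem_product.mp hp
    obtain ⟨haDx, haDy⟩ := Finset.mem_inter.mp hp1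
    obtain ⟨ha1, ha2⟩ := hmemD y a haDy
    obtain ⟨hc1, hc2⟩ := hmemD y c hcDy
    simp only [hK, Finset.mem_filter, Finset.mem_product]
    refine ⟨⟨haDx, ha2, hc1, hc2⟩, by abel⟩
  have hginj : ∀ y, Function.Injective (fun p : Z × Z => (p.1, p.1 - y, p.2, p.2 - y)) := by
    intro y p q h
    simp only [Prod.mk.injEq] at h
    exact Prod.ext h.1 h.2.2.1
  have hgcard : ∀ y, (g y).card = (Dx ∩ D y).card * (D y).card := by
    intro y
    rw [hg, Finset.card_image_of_injective _ (hginj y), Finset.card_product]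
  have hdisj : (F : Set Z).PairwiseDisjoint g := by
    intro y _ z _ hyz
    simp only [Finset.disjoint_left]
    intro p hpy hpz
    simp only [hg, Finset.mem_image] at hpy hpz
    obtain ⟨⟨a, c⟩, _, rfl⟩ := hpy
    obtain ⟨⟨a', c'⟩, _, h⟩ := hpz
    simp only [Prod.mk.injEq] at h
    obtain ⟨rfl, h2, -⟩ := h
    exact hyz (by linear_combination (norm := abel_nf) h2)
  have hbi : (F.biUnion g).card = ∑ y ∈ F, (g y).card := Finset.card_biUnion hdisj
  have hsub : F.biUnion g ⊆ K := by
    intro p hp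
    obtain ⟨y, hy, hpy⟩ := Finset.mem_biUnion.mp hp
    exact hgsub y hy hpy
  -- Lower bound
  have hlow : (F.card : ℝ) * (S * R) ≤ (K.card : ℝ) := by
    calc (F.card : ℝ) * (S * R) = ∑ _y ∈ F, S * R := by
          rw [Finset.sum_const, nsmul_eq_mul]
      _ ≤ ∑ y ∈ F, ((g y).card : ℝ) := by
          refine Finset.sum_le_sum fun y hy => ?_
          rw [hgcard y]
          push_cast
          have h1 := hint y hy
          have h2 : (R : ℝ) ≤ ((D y).card : ℝ) := by exact_mod_cast hrep y hy
          exact mul_le_mul h1 h2 (by positivity) (Nat.cast_nonneg _)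
      _ = ((F.biUnion g).card : ℝ) := by rw [hbi]; push_cast; ring
      _ ≤ (K.card : ℝ) := by exact_mod_cast Finset.card_le_card hsub
  calc (F.card : ℝ) * S * R = (F.card : ℝ) * (S * R) := by ring
    _ ≤ (K.card : ℝ) := hlow
    _ ≤ (Dx.card : ℝ) * Q := hup
end

section
/- For all reals τ ≥ 0, μ > 0, σ > 0, α ≥ 0 and every ε > 0 there exists M₀ such that the following holds. Let Z be an abelian group and Δ ⊆ Z a finite set with |Δ| = M ≥ M₀ and E_8(Δ) ≤ M^{4+3τ+σ}. Let D ⊆ Z satisfy M^{τ+α} ≤ |Δ[x]| ≤ 2·M^{τ+α} for every x ∈ D and Σ_{x∈D} |Δ[x]|² ≥ M^{2+τ}. Then at least one of the following holds. (i) (Comity μ:) there exist a real β ≥ τ+α−μ and a set P ⊆ D×D with M^β ≤ |Δ[x] ∩ Δ[y]| ≤ 2·M^β for all (x,y) ∈ P and |P| ≥ M^{3−2α−β−ε}. (ii) There exist a real α' ≤ α − μ + 2σ + ε, a real p' ≥ 1, and a set D' ⊆ Z such that p' ≤ |Δ[x]| ≤ 2·p' for every x ∈ D', Σ_{x∈D'}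 |Δ[x]| ≥ M^{2−α'}, and Σ_{x∈D'} |Δ[x]|² ≥ M^{2+τ−2σ−ε}. -/
/-- `Δ[x] = Δ ∩ (x+Δ)`, the set of elements of `Δ` that are `x` plus an element of `Δ`. -/
def fib {Z : Type*} [AddCommGroup Z] [DecidableEq Z] (Δ : Finset Z) (x : Z) : Finset Z :=
  Δ ∩ Δ.image (x + ·)

open Finset Filter Asymptotics

namespace Finset
variable {ι α : Type*} [DecidableEq α] {s : Finset ι} {U : Finset α} {F : ι → Finset α}

theorem sum_card_eq_sum_card_filter_mem (hF : ∀ i ∈ s, F i ⊆ U) :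
    ∑ i ∈ s, #(F i) = ∑ a ∈ U, #{i ∈ s | a ∈ F i} := by
  calc ∑ i ∈ s, #(F i) = ∑ i ∈ s, #{a ∈ U | a ∈ F i} :=
        sum_congr rfl fun i hi => by rw [filter_mem_eq_inter, inter_eq_right.mpr (hF i hi)]
    _ = ∑ a ∈ U, #{i ∈ s | a ∈ F i} := by simp only [card_filter]; exact sum_comm

theorem sum_card_inter_eq_sum_sq (hF : ∀ i ∈ s, F i ⊆ U) :
    ∑ p ∈ s ×ˢ s, #(F p.1 ∩ F p.2) = ∑ a ∈ U, #{i ∈ s | a ∈ F i} ^ 2 := by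
  rw [sum_card_eq_sum_card_filter_mem fun p hp =>
    inter_subset_left.trans (hF p.1 (mem_product.mp hp).1)]
  refine sum_congr rfl fun a _ => ?_
  simp only [mem_inter]
  rw [filter_product (fun i => a ∈ F i) (fun i => a ∈ F i), card_product, sq]

theorem sq_sum_card_le_card_mul_sum_card_inter (hF : ∀ i ∈ s, F i ⊆ U) :
    (∑ i ∈ s, #(F i)) ^ 2 ≤ #U * ∑ p ∈ s ×ˢ s, #(F p.1 ∩ F p.2) := by
  rw [sum_card_eq_sum_card_filter_mem hF, sum_card_inter_eq_sum_sq hF]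
  exact sq_sum_le_card_mul_sum_sq

theorem exists_dyadic_subset (s : Finset ι) (f : ι → ℕ) (w : ι → ℝ) {N : ℕ}
    (hf : ∀ i ∈ s, f i ≠ 0 ∧ f i ≤ N) :
    ∃ Q : ℝ, 1 ≤ Q ∧ ∃ t ⊆ s, (∀ i ∈ t, Q ≤ f i ∧ (f i : ℝ) ≤ 2 * Q) ∧
      ∑ i ∈ s, w i ≤ (Nat.log 2 N + 1) * ∑ i ∈ t, w i := by
  have hJ : (0 : ℝ) < Nat.log 2 N + 1 := by positivity
  obtain ⟨k, -, hk⟩ := exists_le_sum_fiber_of_maps_to_of_nsmul_le_sum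
    (f := fun i => Nat.log 2 (f i)) (t := range (Nat.log 2 N + 1))
    (fun i hi => mem_range.mpr (Nat.lt_succ_of_le (Nat.log_mono_right (hf i hi).2)))
    nonempty_range_add_one (b := (∑ i ∈ s, w i) / (Nat.log 2 N + 1))
    (by rw [card_range, nsmul_eq_mul, Nat.cast_add_one, mul_div_cancel₀ _ hJ.ne'])
  refine ⟨2 ^ k, one_le_pow₀ one_le_two, _, filter_subset _ _, fun i hi => ?_,
    (div_le_iff₀' hJ).mp hk⟩
  obtain ⟨his, rfl⟩ := mem_filter.mp hi
  have hlow := Nat.pow_log_le_self 2 (hf i his).1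
  have hhigh := Nat.lt_pow_succ_log_self one_lt_two (f i)
  rw [pow_succ] at hhigh
  constructor
  · exact_mod_cast hlow
  · rw [mul_comm]; exact_mod_cast hhigh.le

end Finset

theorem isLittleO_natLog_add_one_pow_rpow (n : ℕ) {ε : ℝ} (hε : 0 < ε) :
    (fun M : ℕ => ((Nat.log 2 M : ℝ) + 1) ^ n) =o[atTop] fun M => (M : ℝ) ^ ε := by
  have hlog : (fun M : ℕ => (Nat.log 2 M : ℝ) + 1) =O[atTop] fun M => Real.log M := by
    refine IsBigO.of_bound 3 ?_
    filter_upwards [eventually_ge_atTop 3] with M hM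
    have hM : (3 : ℝ) ≤ M := by exact_mod_cast hM
    have h1 : 1 ≤ Real.log M := by
      rw [Real.le_log_iff_exp_le (by linarith)]
      linarith [Real.exp_one_lt_d9]
    have h2 : (Nat.log 2 M : ℝ) ≤ Real.log M / Real.log 2 := by
      simpa [Real.logb] using Real.natLog_le_logb M 2
    have h3 : Real.log M / Real.log 2 ≤ 2 * Real.log M := by
      rw [div_le_iff₀ (Real.log_pos one_lt_two)]
      nlinarith [Real.log_two_gt_d9]
    rw [Real.norm_of_nonneg (by positivity), Real.norm_of_nonneg (by linarith)]
    linarith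
  have hpow : (fun x : ℝ => Real.log x ^ n) =o[atTop] fun x => x ^ ε := by
    simpa using isLittleO_log_rpow_rpow_atTop (n : ℝ) hε
  exact (hlog.pow n).trans_isLittleO (hpow.comp_tendsto tendsto_natCast_atTop_atTop)

theorem eventually_mul_natLog_add_one_pow_le_rpow (c : ℝ) (n : ℕ) {ε : ℝ} (hε : 0 < ε) :
    ∀ᶠ M : ℕ in atTop, c * ((Nat.log 2 M : ℝ) + 1) ^ n ≤ (M : ℝ) ^ ε := by
  filter_upwards [(isLittleO_natLog_add_one_pow_rpow n hε).bound (c := 1 / (|c| + 1))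
    (by positivity)] with M hM
  rw [Real.norm_of_nonneg (by positivity), Real.norm_of_nonneg (by positivity),
    div_mul_eq_mul_div, one_mul, le_div_iff₀' (by positivity)] at hM
  nlinarith [le_abs_self c, pow_nonneg (by positivity : (0 : ℝ) ≤ (Nat.log 2 M : ℝ) + 1) n]

theorem Real.rpow_sub_le_of_le_rpow_mul {m a b X : ℝ} (hm : 0 < m) (h : m ^ a ≤ m ^ b * X) :
    m ^ (a - b) ≤ X := by
  rwa [Real.rpow_sub hm, div_le_iff₀' (Real.rpow_pos_of_pos hm b)]

section Fib

variable {Z : Type*} [AddCommGroup Z] [DecidableEq Z] {Δ : Finset Z}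

theorem mem_fib {a x : Z} : a ∈ fib Δ x ↔ a ∈ Δ ∧ a - x ∈ Δ := by
  simp only [fib, mem_inter, mem_image]
  refine and_congr_right fun _ => ⟨?_, fun h => ⟨a - x, h, add_sub_cancel _ _⟩⟩
  rintro ⟨b, hb, rfl⟩
  simpa using hb

theorem fib_subset (x : Z) : fib Δ x ⊆ Δ := inter_subset_left

theorem card_fib_inter_fib_le (x y : Z) : #(fib Δ x ∩ fib Δ y) ≤ #(fib Δ (x - y)) := by
  refine card_le_card_of_injOn (· - y) (fun a ha => ?_) (sub_left_injective.injOn)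
  simp only [coe_inter, Set.mem_inter_iff, mem_coe, mem_fib] at ha ⊢
  exact ⟨ha.2.2, by rw [sub_sub_sub_cancel_right]; exact ha.1.2⟩

theorem sq_sum_sq_card_fib_le {D : Finset Z} {K : ℝ} (hD : ∀ x ∈ D, (#(fib Δ x) : ℝ) ≤ K) :
    (∑ x ∈ D, (#(fib Δ x) : ℝ) ^ 2) ^ 2
      ≤ K ^ 2 * #Δ * ∑ p ∈ D ×ˢ D, (#(fib Δ p.1 ∩ fib Δ p.2) : ℝ) := by
  have hK : ∑ x ∈ D, (#(fib Δ x) : ℝ) ^ 2 ≤ K * ∑ x ∈ D, (#(fib Δ x) : ℝ) := by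
    rw [mul_sum]
    exact sum_le_sum fun x hx => by rw [sq]; gcongr; exact hD x hx
  have hCS : ((∑ x ∈ D, #(fib Δ x) : ℕ) : ℝ) ^ 2
      ≤ (#Δ * ∑ p ∈ D ×ˢ D, #(fib Δ p.1 ∩ fib Δ p.2) : ℕ) := by
    exact_mod_cast sq_sum_card_le_card_mul_sum_card_inter fun x _ => fib_subset x
  push_cast at hCS
  calc (∑ x ∈ D, (#(fib Δ x) : ℝ) ^ 2) ^ 2 ≤ (K * ∑ x ∈ D, (#(fib Δ x) : ℝ)) ^ 2 := by
        gcongr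
    _ ≤ K ^ 2 * (#Δ * ∑ p ∈ D ×ˢ D, (#(fib Δ p.1 ∩ fib Δ p.2) : ℝ)) := by
        rw [mul_pow]; gcongr
    _ = _ := by ring

def altRepr (Δ : Finset Z) (s : Z) : Finset (Z × Z × Z × Z) :=
  (Δ ×ˢ Δ ×ˢ Δ ×ˢ Δ).filter fun q => q.1 - q.2.1 + q.2.2.1 - q.2.2.2 = s

theorem sum_card_fib_mul_card_fib_le_card_altRepr (P : Finset (Z × Z)) (s : Z) :
    ∑ p ∈ P with p.1 - p.2 = s, #(fib Δ p.1) * #(fib Δ p.2) ≤ #(altRepr Δ s) := by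
  simp_rw [← card_product]
  rw [← card_sigma]
  -- `a ∈ Δ[x]` and `b ∈ Δ[y]` give the representation `x - y = a - (a - x) + (b - y) - b`.
  refine card_le_card_of_injOn (fun t => (t.2.1, t.2.1 - t.1.1, t.2.2 - t.1.2, t.2.2))
    (fun ⟨⟨x, y⟩, a, b⟩ ht => ?_) fun ⟨⟨x, y⟩, a, b⟩ _ ⟨⟨x', y'⟩, a', b'⟩ _ h => ?_
  · simp only [coe_sigma, Set.mem_sigma_iff, mem_coe, mem_filter, mem_product, mem_fib] at ht
    simp only [altRepr, mem_coe, mem_filter, mem_product]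
    refine ⟨⟨ht.2.1.1, ht.2.1.2, ht.2.2.2, ht.2.2.1⟩, ?_⟩
    rw [← ht.1.2]; abel
  · simp only [Prod.mk.injEq] at h
    obtain ⟨rfl, hx, hy, rfl⟩ := h
    obtain rfl := sub_right_inj.mp hx
    obtain rfl := sub_right_inj.mp hy
    rfl

theorem sum_sq_card_altRepr_le_E8 (S : Finset Z) : ∑ s ∈ S, #(altRepr Δ s) ^ 2 ≤ E8 Δ := by
  simp_rw [sq, ← card_product]
  rw [← card_sigma, E8]
  -- `a - b + c - d = e - f + g - h` iff `a + c + f + h = b + d + e + g`.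
  refine card_le_card_of_injOn (fun t => (t.2.1.1, t.2.1.2.2.1, t.2.2.2.1, t.2.2.2.2.2,
      t.2.1.2.1, t.2.1.2.2.2, t.2.2.1, t.2.2.2.2.1))
    (fun ⟨s, ⟨a, b, c, d⟩, e, f, g, h⟩ ht => ?_)
    fun ⟨s, ⟨a, b, c, d⟩, e, f, g, h⟩ ht ⟨s', ⟨a', b', c', d'⟩, e', f', g', h'⟩ ht' heq => ?_
  · simp only [coe_sigma, Set.mem_sigma_iff, mem_coe, mem_product, altRepr, mem_filter] at ht
    obtain ⟨-, ⟨⟨ha, hb, hc, hd⟩, hq⟩, ⟨he, hf, hg, hh⟩, hr⟩ := ht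
    simp only [mem_coe, mem_filter, mem_product]
    refine ⟨⟨ha, hc, hf, hh, hb, hd, he, hg⟩, ?_⟩
    rw [← sub_eq_zero, ← sub_eq_zero.mpr (hq.trans hr.symm)]
    abel
  · simp only [coe_sigma, Set.mem_sigma_iff, mem_coe, mem_product, altRepr, mem_filter] at ht ht'
    simp only [Prod.mk.injEq] at heq
    obtain ⟨rfl, rfl, rfl, rfl, rfl, rfl, rfl, rfl⟩ := heq
    rw [← ht.2.1.2, ← ht'.2.1.2]

theorem pow_four_mul_sq_card_le_card_image_sub_mul_E8 {D : Finset Z} {P : Finset (Z × Z)}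
    {T : ℝ} (hT : 0 ≤ T) (hP : P ⊆ D ×ˢ D) (hD : ∀ x ∈ D, T ≤ #(fib Δ x)) :
    T ^ 4 * #P ^ 2 ≤ #(P.image fun p => p.1 - p.2) * E8 Δ := by
  set S := P.image fun p => p.1 - p.2
  have hrepr (s : Z) : T ^ 2 * #{p ∈ P | p.1 - p.2 = s} ≤ #(altRepr Δ s) := by
    calc T ^ 2 * #{p ∈ P | p.1 - p.2 = s}
        = ∑ p ∈ P with p.1 - p.2 = s, T * T := by rw [sum_const, nsmul_eq_mul]; ring
      _ ≤ ∑ p ∈ P with p.1 - p.2 = s, (#(fib Δ p.1) * #(fib Δ p.2) : ℝ) := by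
        refine sum_le_sum fun p hp => ?_
        obtain ⟨hx, hy⟩ := mem_product.mp (hP (mem_filter.mp hp).1)
        exact mul_le_mul (hD _ hx) (hD _ hy) hT (hT.trans (hD _ hx))
      _ ≤ #(altRepr Δ s) := by exact_mod_cast sum_card_fib_mul_card_fib_le_card_altRepr P s
  have hsum : T ^ 2 * #P = ∑ s ∈ S, T ^ 2 * #{p ∈ P | p.1 - p.2 = s} := by
    rw [← mul_sum, card_eq_sum_card_image (fun p : Z × Z => p.1 - p.2) P]
    push_cast; rfl
  calc T ^ 4 * #P ^ 2 = (∑ s ∈ S, T ^ 2 * #{p ∈ P | p.1 - p.2 = s}) ^ 2 := by rw [← hsum]; ring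
    _ ≤ #S * ∑ s ∈ S, (T ^ 2 * #{p ∈ P | p.1 - p.2 = s}) ^ 2 := sq_sum_le_card_mul_sum_sq
    _ ≤ #S * ∑ s ∈ S, (#(altRepr Δ s) : ℝ) ^ 2 := by
        gcongr with s
        exact hrepr s
    _ ≤ #S * E8 Δ := by gcongr; exact_mod_cast sum_sq_card_altRepr_le_E8 S

end Fib

section Dichotomy

variable {Z : Type*} [AddCommGroup Z] [DecidableEq Z] {Δ D : Finset Z} {P : Finset (Z × Z)}
  {τ α μ σ ε Q : ℝ}

theorem exists_dyadic_pairs (hΔ : Δ.Nonempty)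
    (hD : ∀ x ∈ D, (#(fib Δ x) : ℝ) ≤ 2 * (#Δ : ℝ) ^ (τ + α))
    (hE : (#Δ : ℝ) ^ (2 + τ) ≤ ∑ x ∈ D, (#(fib Δ x) : ℝ) ^ 2) :
    ∃ Q : ℝ, 1 ≤ Q ∧ ∃ P ⊆ D ×ˢ D,
      (∀ p ∈ P, Q ≤ #(fib Δ p.1 ∩ fib Δ p.2) ∧ (#(fib Δ p.1 ∩ fib Δ p.2) : ℝ) ≤ 2 * Q) ∧
      (#Δ : ℝ) ^ (3 - 2 * α) ≤ 8 * (Nat.log 2 #Δ + 1) * Q * #P := by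
  have hm : (0 : ℝ) < #Δ := by exact_mod_cast hΔ.card_pos
  set C := ∑ p ∈ D ×ˢ D, (#(fib Δ p.1 ∩ fib Δ p.2) : ℝ)
  have hC : (#Δ : ℝ) ^ (3 - 2 * α) ≤ 4 * C := by
    have h := (pow_le_pow_left₀ (by positivity) hE 2).trans (sq_sum_sq_card_fib_le hD)
    have e : ((#Δ : ℝ) ^ (2 + τ)) ^ 2
        = ((#Δ : ℝ) ^ (τ + α)) ^ 2 * #Δ * (#Δ : ℝ) ^ (3 - 2 * α) := by
      rw [← Real.rpow_mul_natCast hm.le, ← Real.rpow_mul_natCast hm.le,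
        ← Real.rpow_add_one hm.ne', ← Real.rpow_add hm]
      congr 1; push_cast; ring
    rw [e] at h
    refine le_of_mul_le_mul_left (a := ((#Δ : ℝ) ^ (τ + α)) ^ 2 * #Δ) ?_ (by positivity)
    linarith
  obtain ⟨Q, hQ, P, hPB, hPQ, hCP⟩ := exists_dyadic_subset ((D ×ˢ D).filter
      fun p => #(fib Δ p.1 ∩ fib Δ p.2) ≠ 0) (fun p => #(fib Δ p.1 ∩ fib Δ p.2))
    (fun p => (#(fib Δ p.1 ∩ fib Δ p.2) : ℝ)) (N := #Δ)
    fun p hp => ⟨by exact (mem_filter.mp hp).2,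
      card_le_card (inter_subset_left.trans (fib_subset p.1))⟩
  rw [sum_filter_of_ne fun p _ h => by exact_mod_cast h] at hCP
  refine ⟨Q, hQ, P, hPB.trans (filter_subset _ _), hPQ, ?_⟩
  have hPsum : ∑ p ∈ P, (#(fib Δ p.1 ∩ fib Δ p.2) : ℝ) ≤ #P * (2 * Q) := by
    simpa using sum_le_sum fun p hp => (hPQ p hp).2
  calc (#Δ : ℝ) ^ (3 - 2 * α) ≤ 4 * C := hC
    _ ≤ 4 * ((Nat.log 2 #Δ + 1) * (#P * (2 * Q))) :=
        by gcongr; exact hCP.trans (mul_le_mul_of_nonneg_left hPsum (by positivity))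
    _ = 8 * (Nat.log 2 #Δ + 1) * Q * #P := by ring

theorem comity_of_rpow_le (hΔ : 2 ≤ #Δ) (hJ : 8 * ((Nat.log 2 #Δ : ℝ) + 1) ≤ (#Δ : ℝ) ^ ε)
    (hPD : P ⊆ D ×ˢ D)
    (hPQ : ∀ p ∈ P, Q ≤ #(fib Δ p.1 ∩ fib Δ p.2) ∧ (#(fib Δ p.1 ∩ fib Δ p.2) : ℝ) ≤ 2 * Q)
    (hP : (#Δ : ℝ) ^ (3 - 2 * α) ≤ 8 * (Nat.log 2 #Δ + 1) * Q * #P)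
    (hQ : (#Δ : ℝ) ^ (τ + α - μ) ≤ Q) :
    ∃ β : ℝ, τ + α - μ ≤ β ∧ ∃ P : Finset (Z × Z), P ⊆ D ×ˢ D ∧
      (∀ p ∈ P, (#Δ : ℝ) ^ β ≤ #(fib Δ p.1 ∩ fib Δ p.2) ∧
        (#(fib Δ p.1 ∩ fib Δ p.2) : ℝ) ≤ 2 * (#Δ : ℝ) ^ β) ∧
      (#Δ : ℝ) ^ (3 - 2 * α - β - ε) ≤ #P := by
  have hm : (1 : ℝ) < #Δ := by exact_mod_cast hΔ
  have hQ0 : 0 < Q := (Real.rpow_pos_of_pos (by linarith) _).trans_le hQ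
  have hβ : (#Δ : ℝ) ^ Real.logb #Δ Q = Q := Real.rpow_logb (by linarith) hm.ne' hQ0
  refine ⟨Real.logb #Δ Q, (Real.le_logb_iff_rpow_le hm hQ0).mpr hQ, P, hPD,
    by simpa only [hβ] using hPQ, ?_⟩
  rw [sub_sub]
  refine Real.rpow_sub_le_of_le_rpow_mul (by linarith) ?_
  rw [Real.rpow_add (by linarith), hβ]
  calc (#Δ : ℝ) ^ (3 - 2 * α) ≤ 8 * (Nat.log 2 #Δ + 1) * Q * #P := hP
    _ ≤ (#Δ : ℝ) ^ ε * Q * #P := by gcongr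
    _ = Q * (#Δ : ℝ) ^ ε * #P := by ring

theorem rpow_le_card_image_sub (hΔ : Δ.Nonempty)
    (hE8 : (E8 Δ : ℝ) ≤ (#Δ : ℝ) ^ (4 + 3 * τ + σ))
    (hD : ∀ x ∈ D, (#Δ : ℝ) ^ (τ + α) ≤ #(fib Δ x)) (hPD : P ⊆ D ×ˢ D)
    (hP : (#Δ : ℝ) ^ (3 - 2 * α) ≤ 8 * (Nat.log 2 #Δ + 1) * Q * #P) :
    (#Δ : ℝ) ^ (2 + τ - σ)
      ≤ 64 * ((Nat.log 2 #Δ : ℝ) + 1) ^ 2 * Q ^ 2 * #(P.image fun p => p.1 - p.2) := by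
  have hm : (0 : ℝ) < #Δ := by exact_mod_cast hΔ.card_pos
  have hE := pow_four_mul_sq_card_le_card_image_sub_mul_E8 (by positivity) hPD hD
  have e : (#Δ : ℝ) ^ (2 + τ - σ) * (#Δ : ℝ) ^ (4 + 3 * τ + σ)
      = ((#Δ : ℝ) ^ (τ + α)) ^ 4 * ((#Δ : ℝ) ^ (3 - 2 * α)) ^ 2 := by
    rw [← Real.rpow_mul_natCast hm.le, ← Real.rpow_mul_natCast hm.le, ← Real.rpow_add hm,
      ← Real.rpow_add hm]
    congr 1; push_cast; ring
  refine le_of_mul_le_mul_right ?_ (Real.rpow_pos_of_pos hm (4 + 3 * τ + σ))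
  calc (#Δ : ℝ) ^ (2 + τ - σ) * (#Δ : ℝ) ^ (4 + 3 * τ + σ)
      = ((#Δ : ℝ) ^ (τ + α)) ^ 4 * ((#Δ : ℝ) ^ (3 - 2 * α)) ^ 2 := e
    _ ≤ ((#Δ : ℝ) ^ (τ + α)) ^ 4 * (8 * (Nat.log 2 #Δ + 1) * Q * #P) ^ 2 := by gcongr
    _ = 64 * ((Nat.log 2 #Δ : ℝ) + 1) ^ 2 * Q ^ 2 * (((#Δ : ℝ) ^ (τ + α)) ^ 4 * #P ^ 2) := by
        ring
    _ ≤ 64 * ((Nat.log 2 #Δ : ℝ) + 1) ^ 2 * Q ^ 2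
          * (#(P.image fun p => p.1 - p.2) * (#Δ : ℝ) ^ (4 + 3 * τ + σ)) := by
        exact mul_le_mul_of_nonneg_left (hE.trans (by gcongr)) (by positivity)
    _ = _ := by ring

theorem exists_lower_height_of_lt_rpow (hΔ : 2 ≤ #Δ) (hσ : 0 ≤ σ)
    (hJ : 256 * ((Nat.log 2 #Δ : ℝ) + 1) ^ 3 ≤ (#Δ : ℝ) ^ ε)
    (hE8 : (E8 Δ : ℝ) ≤ (#Δ : ℝ) ^ (4 + 3 * τ + σ))
    (hD : ∀ x ∈ D, (#Δ : ℝ) ^ (τ + α) ≤ #(fib Δ x)) (hPD : P ⊆ D ×ˢ D) (hQ1 : 1 ≤ Q)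
    (hPQ : ∀ p ∈ P, Q ≤ #(fib Δ p.1 ∩ fib Δ p.2))
    (hP : (#Δ : ℝ) ^ (3 - 2 * α) ≤ 8 * (Nat.log 2 #Δ + 1) * Q * #P)
    (hQ : Q < (#Δ : ℝ) ^ (τ + α - μ)) :
    ∃ (α' p' : ℝ) (D' : Finset Z), α' ≤ α - μ + 2 * σ + ε ∧ 1 ≤ p' ∧
      (∀ x ∈ D', p' ≤ #(fib Δ x) ∧ (#(fib Δ x) : ℝ) ≤ 2 * p') ∧
      (#Δ : ℝ) ^ (2 - α') ≤ ∑ x ∈ D', (#(fib Δ x) : ℝ) ∧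
      (#Δ : ℝ) ^ (2 + τ - 2 * σ - ε) ≤ ∑ x ∈ D', (#(fib Δ x) : ℝ) ^ 2 := by
  have hm : (1 : ℝ) < #Δ := by exact_mod_cast hΔ
  have hm0 : (0 : ℝ) < #Δ := by linarith
  set J : ℝ := (Nat.log 2 #Δ : ℝ) + 1
  set S := P.image fun p => p.1 - p.2
  have hS := rpow_le_card_image_sub (card_pos.mp (by omega)) hE8 hD hPD hP
  have hSQ : ∀ s ∈ S, Q ≤ #(fib Δ s) := by
    simp only [S, mem_image]
    rintro _ ⟨p, hp, rfl⟩
    exact (hPQ p hp).trans (by exact_mod_cast card_fib_inter_fib_le p.1 p.2)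
  obtain ⟨R, hR1, D', hD'S, hD'R, hSD'⟩ := exists_dyadic_subset S (fun s => #(fib Δ s))
    (fun _ => (1 : ℝ)) (N := #Δ) fun s hs =>
      ⟨Nat.cast_ne_zero.mp (zero_lt_one.trans_le (hQ1.trans (hSQ s hs))).ne',
        card_le_card (fib_subset s)⟩
  simp only [sum_const, nsmul_eq_mul, mul_one] at hSD'
  have hD' : (#Δ : ℝ) ^ (2 + τ - σ) ≤ 64 * J ^ 3 * Q ^ 2 * #D' :=
    calc (#Δ : ℝ) ^ (2 + τ - σ) ≤ 64 * J ^ 2 * Q ^ 2 * #S := hS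
      _ ≤ 64 * J ^ 2 * Q ^ 2 * (J * #D') := by gcongr
      _ = 64 * J ^ 3 * Q ^ 2 * #D' := by ring
  obtain ⟨s₀, hs₀⟩ : D'.Nonempty := by
    rw [nonempty_iff_ne_empty]
    rintro rfl
    simp only [card_empty, Nat.cast_zero, mul_zero] at hD'
    linarith [Real.rpow_pos_of_pos hm0 (2 + τ - σ)]
  have hQR : Q ≤ 2 * R := (hSQ s₀ (hD'S hs₀)).trans (hD'R s₀ hs₀).2
  have hJ0 : 0 ≤ J := by positivity
  refine ⟨α - μ + σ + ε, R, D', by linarith, hR1, hD'R, ?_, ?_⟩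
  · have hRD : R * #D' ≤ ∑ x ∈ D', (#(fib Δ x) : ℝ) := by
      simpa [mul_comm] using sum_le_sum fun s hs => (hD'R s hs).1
    rw [show (2 : ℝ) - (α - μ + σ + ε) = 2 + τ - σ - (ε + (τ + α - μ)) by ring]
    refine Real.rpow_sub_le_of_le_rpow_mul hm0 ?_
    rw [Real.rpow_add hm0]
    calc (#Δ : ℝ) ^ (2 + τ - σ) ≤ 64 * J ^ 3 * Q ^ 2 * #D' := hD'
      _ = 64 * J ^ 3 * Q * (Q * #D') := by ring
      _ ≤ 64 * J ^ 3 * (#Δ : ℝ) ^ (τ + α - μ) * (2 * R * #D') := by gcongr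
      _ = 128 * J ^ 3 * (#Δ : ℝ) ^ (τ + α - μ) * (R * #D') := by ring
      _ ≤ (#Δ : ℝ) ^ ε * (#Δ : ℝ) ^ (τ + α - μ) * ∑ x ∈ D', (#(fib Δ x) : ℝ) := by
        gcongr; linarith [pow_nonneg hJ0 3]
  · have hRD : R ^ 2 * #D' ≤ ∑ x ∈ D', (#(fib Δ x) : ℝ) ^ 2 := by
      simpa [mul_comm] using
        sum_le_sum fun s hs => pow_le_pow_left₀ (by linarith) (hD'R s hs).1 2
    calc (#Δ : ℝ) ^ (2 + τ - 2 * σ - ε) ≤ (#Δ : ℝ) ^ (2 + τ - σ - ε) :=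
          Real.rpow_le_rpow_of_exponent_le hm.le (by linarith)
      _ ≤ ∑ x ∈ D', (#(fib Δ x) : ℝ) ^ 2 := by
        refine Real.rpow_sub_le_of_le_rpow_mul hm0 ?_
        calc (#Δ : ℝ) ^ (2 + τ - σ) ≤ 64 * J ^ 3 * Q ^ 2 * #D' := hD'
          _ ≤ 64 * J ^ 3 * (2 * R) ^ 2 * #D' := by gcongr
          _ = 256 * J ^ 3 * (R ^ 2 * #D') := by ring
          _ ≤ (#Δ : ℝ) ^ ε * ∑ x ∈ D', (#(fib Δ x) : ℝ) ^ 2 := by gcongr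

end Dichotomy

theorem comity_dichotomy_general (τ μ σ α ε : ℝ) (hσ : 0 < σ) (hε : 0 < ε) :
    ∃ M₀ : ℕ, ∀ (Z : Type*) [AddCommGroup Z] [DecidableEq Z] (Δ : Finset Z),
      M₀ ≤ Δ.card →
      (E8 Δ : ℝ) ≤ (Δ.card : ℝ) ^ ((4 : ℝ) + 3 * τ + σ) →
      ∀ D : Finset Z,
        (∀ x ∈ D, (Δ.card : ℝ) ^ (τ + α) ≤ ((fib Δ x).card : ℝ) ∧
          ((fib Δ x).card : ℝ) ≤ 2 * (Δ.card : ℝ) ^ (τ + α)) →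
        (Δ.card : ℝ) ^ ((2 : ℝ) + τ) ≤ ∑ x ∈ D, ((fib Δ x).card : ℝ) ^ 2 →
        (∃ β : ℝ, τ + α - μ ≤ β ∧ ∃ P : Finset (Z × Z), P ⊆ D ×ˢ D ∧
            (∀ p ∈ P, (Δ.card : ℝ) ^ β ≤ ((fib Δ p.1 ∩ fib Δ p.2).card : ℝ) ∧
              ((fib Δ p.1 ∩ fib Δ p.2).card : ℝ) ≤ 2 * (Δ.card : ℝ) ^ β) ∧
            (Δ.card : ℝ) ^ ((3 : ℝ) - 2 * α - β - ε) ≤ (P.card : ℝ)) ∨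
        (∃ (α' p' : ℝ) (D' : Finset Z),
            α' ≤ α - μ + 2 * σ + ε ∧ 1 ≤ p' ∧
            (∀ x ∈ D', p' ≤ ((fib Δ x).card : ℝ) ∧ ((fib Δ x).card : ℝ) ≤ 2 * p') ∧
            (Δ.card : ℝ) ^ ((2 : ℝ) - α') ≤ ∑ x ∈ D', ((fib Δ x).card : ℝ) ∧
            (Δ.card : ℝ) ^ ((2 : ℝ) + τ - 2 * σ - ε)
              ≤ ∑ x ∈ D', ((fib Δ x).card : ℝ) ^ 2) := by
  obtain ⟨M₀, hM₀⟩ := eventually_atTop.mp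
    ((eventually_mul_natLog_add_one_pow_le_rpow 256 3 hε).and (eventually_ge_atTop 2))
  refine ⟨M₀, fun Z _ _ Δ hM hE8 D hD hE => ?_⟩
  obtain ⟨hJ, hΔ⟩ := hM₀ _ hM
  obtain ⟨Q, hQ1, P, hPD, hPQ, hP⟩ :=
    exists_dyadic_pairs (card_pos.mp (by omega)) (fun x hx => (hD x hx).2) hE
  by_cases hQ : (#Δ : ℝ) ^ (τ + α - μ) ≤ Q
  · refine Or.inl (comity_of_rpow_le hΔ ?_ hPD hPQ hP hQ)
    linarith [le_self_pow₀ (by simp : (1 : ℝ) ≤ (Nat.log 2 #Δ : ℝ) + 1) three_ne_zero]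
  · exact Or.inr (exists_lower_height_of_lt_rpow hΔ hσ.le hJ hE8 (fun x hx => (hD x hx).1) hPD
      hQ1 (fun p hp => (hPQ p hp).1) hP (not_le.mp hQ))

/-- The comity dichotomy lemma: an additive structure at height `α` on an additively
nonsmoothing set either has comity `μ`, or can be replaced by an additive structure of
height at most `α − μ + 2σ + ε` retaining most of the energy. -/
theorem comity_dichotomy (τ μ σ α ε : ℝ) (hτ : 0 ≤ τ) (hμ : 0 < μ) (hσ : 0 < σ)
    (hα : 0 ≤ α) (hε : 0 < ε) :
    ∃ M₀ : ℕ, ∀ (Z : Type*) [AddCommGroup Z] [DecidableEq Z] (Δ : Finset Z),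
      M₀ ≤ Δ.card →
      (E8 Δ : ℝ) ≤ (Δ.card : ℝ) ^ ((4 : ℝ) + 3 * τ + σ) →
      ∀ D : Finset Z,
        (∀ x ∈ D, (Δ.card : ℝ) ^ (τ + α) ≤ ((fib Δ x).card : ℝ) ∧
          ((fib Δ x).card : ℝ) ≤ 2 * (Δ.card : ℝ) ^ (τ + α)) →
        (Δ.card : ℝ) ^ ((2 : ℝ) + τ) ≤ ∑ x ∈ D, ((fib Δ x).card : ℝ) ^ 2 →
        (∃ β : ℝ, τ + α - μ ≤ β ∧ ∃ P : Finset (Z × Z), P ⊆ D ×ˢ D ∧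
            (∀ p ∈ P, (Δ.card : ℝ) ^ β ≤ ((fib Δ p.1 ∩ fib Δ p.2).card : ℝ) ∧
              ((fib Δ p.1 ∩ fib Δ p.2).card : ℝ) ≤ 2 * (Δ.card : ℝ) ^ β) ∧
            (Δ.card : ℝ) ^ ((3 : ℝ) - 2 * α - β - ε) ≤ (P.card : ℝ)) ∨
        (∃ (α' p' : ℝ) (D' : Finset Z),
            α' ≤ α - μ + 2 * σ + ε ∧ 1 ≤ p' ∧
            (∀ x ∈ D', p' ≤ ((fib Δ x).card : ℝ) ∧ ((fib Δ x).card : ℝ) ≤ 2 * p') ∧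
            (Δ.card : ℝ) ^ ((2 : ℝ) - α') ≤ ∑ x ∈ D', ((fib Δ x).card : ℝ) ∧
            (Δ.card : ℝ) ^ ((2 : ℝ) + τ - 2 * σ - ε)
              ≤ ∑ x ∈ D', ((fib Δ x).card : ℝ) ^ 2) :=
  comity_dichotomy_general τ μ σ α ε hσ hε
end
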